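/- Let N ≥ 2, ω = exp(2πi/N), and let a, b, r ∈ ℂ with a ≠ 0, r^N = a^N - b^N, and a - b ω^γ ≠ 0 for all γ. Set x = r/a, y = b/a, so x^N + y^N = 1, and let w be the cyclic function with w(0)=1, w(γ)/w(γ-1) = y/(1 - ω^γ x). Let U, V be the clock and shift operators on ℂ^N with basis |γ⟩, and for ρ ∈ ℤ/N define ψ_ρ = ∑_{γ ∈ ℤ/N} w(γ - ρ)|γ⟩. Then U^{-1}(a - bV) ψ_ρ = r ω^{-ρ} ψ_ρ. -/

import Mathlib

/-!
Clearing the denominator of the recurrence for `w` gives `a w(γ) - b w(γ-1) = r ω^γ w(γ)`,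
which is the eigenvalue equation read off componentwise: `V` shifts `γ` by one and `U⁻¹`
multiplies by `ω^{-γ}`. The one real point is that `w` is `N`-periodic, so that `ψ_ρ` sees the
recurrence also across the wrap-around `γ - ρ = 0 ↦ N - 1`: over a period the factors multiply
to `y^N / ∏_j (1 - ω^j x) = y^N / (1 - x^N) = 1` by the Fermat relation `x^N + y^N = 1`.
-/

open Finset
open scoped Matrix

theorem Matrix.inv_diagonal_of_ne_zero {n K : Type*} [Fintype n] [DecidableEq n] [Field K]
    {v : n → K} (hv : ∀ i, v i ≠ 0) : (Matrix.diagonal v)⁻¹ = Matrix.diagonal fun i => (v i)⁻¹ :=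
  Matrix.inv_eq_right_inv (by simp [Matrix.diagonal_mul_diagonal, hv])

theorem Matrix.mulVec_apply_of_shift {n R : Type*} [Fintype n] [DecidableEq n]
    [AddGroupWithOne n] [NonAssocSemiring R] {V : Matrix n n R}
    (hV : ∀ i j, V i j = if i = j + 1 then 1 else 0) (v : n → R) (i : n) :
    (V *ᵥ v) i = v (i - 1) := by
  simp [Matrix.mulVec, dotProduct, hV, ← sub_eq_iff_eq_add, eq_comm]

theorem Matrix.inv_diagonal_mul_sub_shift_mulVec_apply {n K : Type*} [Fintype n]
    [DecidableEq n] [AddGroupWithOne n] [Field K] {v : n → K} (hv : ∀ i, v i ≠ 0)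
    {V : Matrix n n K} (hV : ∀ i j, V i j = if i = j + 1 then 1 else 0) (a b : K) (u : n → K)
    (i : n) : (((Matrix.diagonal v)⁻¹ * (a • 1 - b • V)) *ᵥ u) i =
      (v i)⁻¹ * (a * u i - b * u (i - 1)) := by
  rw [← Matrix.mulVec_mulVec, Matrix.inv_diagonal_of_ne_zero hv, Matrix.mulVec_diagonal,
    Matrix.sub_mulVec, Matrix.smul_mulVec, Matrix.smul_mulVec, Matrix.one_mulVec, Pi.sub_apply,
    Pi.smul_apply, Pi.smul_apply, Matrix.mulVec_apply_of_shift hV, smul_eq_mul, smul_eq_mul]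

theorem pow_zmod_val_add {M : Type*} [Monoid M] {N : ℕ} [NeZero N] {ω : M} (hω : ω ^ N = 1)
    (d e : ZMod N) : ω ^ (d + e).val = ω ^ d.val * ω ^ e.val := by
  rw [ZMod.val_add, ← pow_eq_pow_mod _ hω, pow_add]

theorem Function.Periodic.apply_zmod_val_intCast {α : Type*} {f : ℤ → α} {N : ℕ} [NeZero N]
    (hf : Function.Periodic f N) (k : ℤ) : f ((k : ZMod N).val) = f k := by
  rw [ZMod.val_intCast, Int.emod_def, mul_comm]
  exact hf.sub_zsmul_eq _

theorem Function.Periodic.apply_zmod_val_sub_one {α : Type*} {f : ℤ → α} {N : ℕ} [NeZero N]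
    (hf : Function.Periodic f N) (d : ZMod N) : f ((d - 1).val) = f (d.val - 1) := by
  have hcast : (((d.val : ℤ) - 1 : ℤ) : ZMod N) = d - 1 := by simp
  rw [← hcast, hf.apply_zmod_val_intCast]

theorem apply_add_natCast_eq_mul_prod {M : Type*} [CommMonoid M] {w c : ℤ → M}
    (hrec : ∀ γ, w γ = w (γ - 1) * c γ) (k : ℤ) (n : ℕ) :
    w (k + n) = w k * ∏ j ∈ range n, c (k + 1 + j) := by
  induction n with
  | zero => simp
  | succ n ih =>
    rw [prod_range_succ, ← mul_assoc, ← ih, hrec (k + (n + 1 : ℕ))]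
    push_cast
    ring_nf

theorem periodic_of_apply_eq_mul {M : Type*} [CommMonoid M] {w c : ℤ → M} {N : ℕ}
    (hrec : ∀ γ, w γ = w (γ - 1) * c γ) (hc : ∀ k, ∏ j ∈ range N, c (k + j) = 1) :
    Function.Periodic w N := fun k => by
  rw [apply_add_natCast_eq_mul_prod hrec, hc, mul_one]

theorem prod_one_sub_pow_mul {K : Type*} [CommRing K] [IsDomain K] {N : ℕ} {ω : K}
    (hω : IsPrimitiveRoot ω N) (hN : 0 < N) (z : K) :
    ∏ j ∈ range N, (1 - ω ^ j * z) = 1 - z ^ N := by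
  simpa [Polynomial.eval_prod] using
    (congrArg (Polynomial.eval 1) (X_pow_sub_C_eq_prod hω hN (rfl : z ^ N = z ^ N))).symm

section CyclicFunction

variable {K : Type*} [Field K] {N : ℕ} {ω x y : K}

theorem zpow_mul_pow_of_pow_eq_one (hω : ω ^ N = 1) (γ : ℤ) (z : K) :
    (ω ^ γ * z) ^ N = z ^ N := by
  rw [mul_pow, ← zpow_natCast (ω ^ γ), ← zpow_mul, mul_comm γ, zpow_mul, zpow_natCast, hω,
    one_zpow, one_mul]

theorem one_sub_zpow_mul_ne_zero (hω : ω ^ N = 1) (hN : N ≠ 0) (hxy : x ^ N + y ^ N = 1)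
    (hy : y ≠ 0) (γ : ℤ) : 1 - ω ^ γ * x ≠ 0 := by
  intro h
  have hxN : x ^ N = 1 := by
    rw [← zpow_mul_pow_of_pow_eq_one hω γ, ← sub_eq_zero.mp h, one_pow]
  rw [hxN, add_eq_left] at hxy
  exact hy (pow_eq_zero_iff hN |>.mp hxy)

theorem prod_div_one_sub_zpow_mul (hω : IsPrimitiveRoot ω N) (hN : 0 < N)
    (hxy : x ^ N + y ^ N = 1) (hy : y ≠ 0) (k : ℤ) :
    ∏ j ∈ range N, y / (1 - ω ^ (k + j) * x) = 1 := by
  have hω0 : ω ≠ 0 := hω.ne_zero hN.ne'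
  have hfactor : ∀ j ∈ range N, 1 - ω ^ (k + j) * x = 1 - ω ^ j * (ω ^ k * x) := fun j _ => by
    rw [zpow_add₀ hω0, zpow_natCast]
    ring
  rw [prod_div_distrib, prod_const, card_range, prod_congr rfl hfactor,
    prod_one_sub_pow_mul hω hN, zpow_mul_pow_of_pow_eq_one hω.pow_eq_one,
    ← eq_sub_of_add_eq' hxy, div_self (pow_ne_zero N hy)]

theorem mul_sub_mul_eq_of_apply_eq_mul_div {w : ℤ → K} {γ : ℤ} (hden : 1 - ω ^ γ * x ≠ 0)
    (hrec : w γ = w (γ - 1) * (y / (1 - ω ^ γ * x))) {a b r : K} (hr : a * x = r)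
    (hb : a * y = b) : a * w γ - b * w (γ - 1) = r * ω ^ γ * w γ := by
  have hcleared : w γ * (1 - ω ^ γ * x) = w (γ - 1) * y := by
    rw [hrec, mul_assoc, div_mul_cancel₀ _ hden]
  subst hr hb
  linear_combination a * hcleared

end CyclicFunction

theorem one_site_eigenvector_general (N : ℕ) [NeZero N]
    (ω : ℂ) (hω : ω = Complex.exp (2 * Real.pi * Complex.I / N))
    (a b r : ℂ) (hr : r ^ N = a ^ N - b ^ N)
    (x y : ℂ) (hx : x = r / a) (hy : y = b / a)
    (w : ℤ → ℂ) (h0 : w 0 = 1)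
    (hrec : ∀ γ : ℤ, w γ = w (γ - 1) * (y / (1 - ω ^ γ * x)))
    (U V : Matrix (ZMod N) (ZMod N) ℂ)
    (hU : ∀ i j : ZMod N, U i j = if i = j then ω ^ (i.val) else 0)
    (hV : ∀ i j : ZMod N, V i j = if i = j + 1 then 1 else 0)
    (ψ : ZMod N → ZMod N → ℂ)
    (hψ : ∀ ρ γ : ZMod N, ψ ρ γ = w ((γ - ρ).val)) :
    ∀ ρ : ZMod N,
      (U⁻¹ * (a • (1 : Matrix (ZMod N) (ZMod N) ℂ) - b • V)).mulVec (ψ ρ) =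
        (r * ω ^ (-(ρ.val : ℤ))) • ψ ρ := by
  intro ρ
  have hprim : IsPrimitiveRoot ω N := hω ▸ Complex.isPrimitiveRoot_exp N (NeZero.ne N)
  have hω0 : ω ≠ 0 := hprim.ne_zero (NeZero.ne N)
  have hy0 : y ≠ 0 := fun h => by simpa [h0, h] using hrec 0
  have ha : a ≠ 0 := fun h => hy0 (by simp [hy, h])
  have hxy : x ^ N + y ^ N = 1 := by
    rw [hx, hy, div_pow, div_pow, hr]
    field_simp
    ring
  have hden : ∀ γ : ℤ, 1 - ω ^ γ * x ≠ 0 :=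
    one_sub_zpow_mul_ne_zero hprim.pow_eq_one (NeZero.ne N) hxy hy0
  have hper : Function.Periodic w N := periodic_of_apply_eq_mul hrec
    (prod_div_one_sub_zpow_mul hprim (NeZero.pos N) hxy hy0)
  have hstep (γ : ℤ) : a * w γ - b * w (γ - 1) = r * ω ^ γ * w γ :=
    mul_sub_mul_eq_of_apply_eq_mul_div (hden γ) (hrec γ) (by rw [hx, mul_div_cancel₀ _ ha])
      (by rw [hy, mul_div_cancel₀ _ ha])
  have hUdiag : U = Matrix.diagonal fun i => ω ^ i.val :=
    Matrix.ext fun i j => by rw [hU, Matrix.diagonal_apply]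
  have hpow (i : ZMod N) : ω ^ i.val = ω ^ (i - ρ).val * ω ^ ρ.val := by
    rw [← pow_zmod_val_add hprim.pow_eq_one, sub_add_cancel]
  ext i
  calc ((U⁻¹ * (a • 1 - b • V)) *ᵥ ψ ρ) i
      = (ω ^ i.val)⁻¹ * (a * w (i - ρ).val - b * w (i - ρ - 1).val) := by
        rw [hUdiag, Matrix.inv_diagonal_mul_sub_shift_mulVec_apply (fun i => pow_ne_zero _ hω0)
          hV, hψ, hψ, sub_right_comm]
    _ = (ω ^ i.val)⁻¹ * (r * ω ^ (i - ρ).val * w (i - ρ).val) := by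
        rw [hper.apply_zmod_val_sub_one, hstep, zpow_natCast]
    _ = ((r * ω ^ (-(ρ.val : ℤ))) • ψ ρ) i := by
        rw [Pi.smul_apply, smul_eq_mul, hψ, hpow, zpow_neg, zpow_natCast]
        field_simp

/-- One-site eigenvectors of the off-diagonal entry of the BBS `L`-operator:
with `x = r/a`, `y = b/a`, `r^N = a^N - b^N`, and `w` the cyclic function at
the Fermat point `(x,y)`, the vectors `ψ_ρ = ∑_γ w(γ-ρ)|γ⟩` satisfy
`U⁻¹(a - bV) ψ_ρ = r ω^{-ρ} ψ_ρ`. -/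
theorem one_site_eigenvector (N : ℕ) [NeZero N] (hN : 2 ≤ N)
    (ω : ℂ) (hω : ω = Complex.exp (2 * Real.pi * Complex.I / N))
    (a b r : ℂ) (ha : a ≠ 0) (hr : r ^ N = a ^ N - b ^ N)
    (hab : ∀ γ : ℤ, a - b * ω ^ γ ≠ 0)
    (x y : ℂ) (hx : x = r / a) (hy : y = b / a)
    (w : ℤ → ℂ) (h0 : w 0 = 1)
    (hrec : ∀ γ : ℤ, w γ = w (γ - 1) * (y / (1 - ω ^ γ * x)))
    (U V : Matrix (ZMod N) (ZMod N) ℂ)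
    (hU : ∀ i j : ZMod N, U i j = if i = j then ω ^ (i.val) else 0)
    (hV : ∀ i j : ZMod N, V i j = if i = j + 1 then 1 else 0)
    (ψ : ZMod N → ZMod N → ℂ)
    (hψ : ∀ ρ γ : ZMod N, ψ ρ γ = w ((γ - ρ).val)) :
    ∀ ρ : ZMod N,
      (U⁻¹ * (a • (1 : Matrix (ZMod N) (ZMod N) ℂ) - b • V)).mulVec (ψ ρ) =
        (r * ω ^ (-(ρ.val : ℤ))) • ψ ρ :=
  one_site_eigenvector_general N ω hω a b r hr x y hx hy w h0 hrec U V hU hV ψ hψ
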